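/- arXiv:2209.03227 — 3 statements merged into one kernel-verified Lean document; each statement's English description precedes it below -/
import Mathlib

section
/- Let G be a finite graph with maximum degree d_max and let v be a vertex of G. Then for every r ≥ 1, the number A_r of connected induced subgraphs of G containing v and having exactly r vertices satisfies A_r ≤ 2^{(d_max - 1) r + 2}. -/
/-!
This is the percolation argument at `p = 1/2`. For a connected `S ∋ v`, the sets `S ∪ U` with
`U` disjoint from the closed neighbourhood `N[S]` all have `S` as the component of `v`, so these
families of `2 ^ (|V| - |N[S]|)` vertex sets are pairwise disjoint, and the number of such `S`
with `|N[S]| ≤ m` is at most `2 ^ m`. A spanning tree of `S` uses up `2 (|S| - 1)` of the at most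
`d |S|` edge ends at `S`, so `|N[S]| ≤ |S| + d |S| - 2 (|S| - 1) = (d - 1) |S| + 2`.
-/

open Finset

namespace SimpleGraph
variable {V : Type*} (G : SimpleGraph V)

lemma subset_of_forall_adj_mem {S T : Finset V} (h : (G.induce (S : Set V)).Connected) {v : V}
    (hvS : v ∈ S) (hvT : v ∈ T) (hT : ∀ x ∈ T, ∀ y ∈ S, G.Adj x y → y ∈ T) : S ⊆ T := by
  intro w hw
  obtain ⟨p⟩ := h.preconnected ⟨v, hvS⟩ ⟨w, hw⟩
  suffices ∀ {x y : (S : Set V)}, (G.induce (S : Set V)).Walk x y → (x : V) ∈ T → (y : V) ∈ T from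
    this p hvT
  intro x y p
  induction p with
  | nil => exact id
  | cons hadj _ ih => exact fun hx => ih (hT _ hx _ (Subtype.prop _) hadj)

variable [Fintype V] [DecidableEq V] [DecidableRel G.Adj]

def closedNbhd (S : Finset V) : Finset V := S ∪ S.biUnion (fun u => G.neighborFinset u)

lemma subset_closedNbhd (S : Finset V) : S ⊆ G.closedNbhd S := subset_union_left

lemma mem_closedNbhd_of_adj {S : Finset V} {x y : V} (hx : x ∈ S) (hxy : G.Adj x y) :
    y ∈ G.closedNbhd S :=
  mem_union_right _ (mem_biUnion.mpr ⟨x, hx, (G.mem_neighborFinset x y).mpr hxy⟩)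

lemma sum_degree_induce (S : Finset V) :
    ∑ u : (S : Set V), (G.induce (S : Set V)).degree u = ∑ u ∈ S, #(G.neighborFinset u ∩ S) := by
  rw [← Finset.sum_coe_sort S]
  refine Finset.sum_congr rfl fun u _ => ?_
  have := congrArg card (G.map_neighborFinset_induce (s := (S : Set V)) u)
  rw [card_map, card_neighborFinset_eq_degree, Finset.toFinset_coe] at this
  convert this

lemma two_mul_card_sub_one_le_sum_card_neighborFinset_inter {S : Finset V}
    (h : (G.induce (S : Set V)).Connected) :
    2 * (#S - 1) ≤ ∑ u ∈ S, #(G.neighborFinset u ∩ S) := by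
  have hedges := h.card_vert_le_card_edgeSet_add_one
  have hsum := (G.induce (S : Set V)).sum_degrees_eq_twice_card_edges
  simp only [SetLike.coe_sort_coe, Nat.card_eq_fintype_card, Fintype.card_coe,
    ← edgeFinset_card] at hedges
  rw [sum_degree_induce] at hsum
  omega

lemma card_closedNbhd_le {S : Finset V} (h : (G.induce (S : Set V)).Connected) {d : ℕ}
    (hdeg : ∀ u ∈ S, G.degree u ≤ d) : #(G.closedNbhd S) ≤ (d - 1) * #S + 2 := by
  have hne : S.Nonempty := nonempty_coe_sort.mp h.nonempty
  have hsplit : #(G.closedNbhd S) = #S + #(S.biUnion (fun u => G.neighborFinset u) \ S) := by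
    rw [closedNbhd, ← union_sdiff_self_eq_union, card_union_of_disjoint disjoint_sdiff]
  have hbdry :
      #(S.biUnion (fun u => G.neighborFinset u) \ S) ≤ ∑ u ∈ S, #(G.neighborFinset u \ S) := by
    have hbdry_eq : S.biUnion (fun u => G.neighborFinset u) \ S =
        S.biUnion (fun u => G.neighborFinset u \ S) := by
      ext; simp only [mem_sdiff, mem_biUnion]; tauto
    exact hbdry_eq ▸ card_biUnion_le
  have hdegsum : ∑ u ∈ S, (#(G.neighborFinset u ∩ S) + #(G.neighborFinset u \ S)) ≤ d * #S := by
    simp_rw [card_inter_add_card_sdiff, card_neighborFinset_eq_degree]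
    simpa [mul_comm] using sum_le_sum hdeg
  rw [sum_add_distrib] at hdegsum
  have hinner := G.two_mul_card_sub_one_le_sum_card_neighborFinset_inter h
  have hpos := hne.card_pos
  rw [Nat.sub_one_mul]
  omega

lemma subset_of_subset_union_of_disjoint_closedNbhd {S S' U : Finset V}
    (h : (G.induce (S : Set V)).Connected) {v : V} (hvS : v ∈ S) (hvS' : v ∈ S')
    (hU : Disjoint U (G.closedNbhd S')) (hsub : S ⊆ S' ∪ U) : S ⊆ S' := by
  refine G.subset_of_forall_adj_mem h hvS hvS' fun x hx y hy hxy => ?_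
  refine (mem_union.mp (hsub hy)).resolve_right fun hyU => ?_
  exact Finset.disjoint_left.mp hU hyU (G.mem_closedNbhd_of_adj hx hxy)

theorem sum_two_pow_card_compl_closedNbhd_le (v : V) (𝒞 : Finset (Finset V))
    (h𝒞 : ∀ S ∈ 𝒞, v ∈ S ∧ (G.induce (S : Set V)).Connected) :
    ∑ S ∈ 𝒞, 2 ^ #(G.closedNbhd S)ᶜ ≤ 2 ^ Fintype.card V := by
  set extensions : Finset V → Finset (Finset V) := fun S => (G.closedNbhd S)ᶜ.powerset.image (S ∪ ·)
  have hdisjN {S U : Finset V} (hU : U ∈ (G.closedNbhd S)ᶜ.powerset) :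
      Disjoint U (G.closedNbhd S) :=
    le_compl_iff_disjoint_right.mp (mem_powerset.mp hU)
  have hdisj {S U : Finset V} (hU : U ∈ (G.closedNbhd S)ᶜ.powerset) : Disjoint S U :=
    (disjoint_compl_right.mono_left (G.subset_closedNbhd S)).mono_right (mem_powerset.mp hU)
  have hcard (S : Finset V) : #(extensions S) = 2 ^ #(G.closedNbhd S)ᶜ := by
    rw [card_image_of_injOn, card_powerset]
    intro U hU U' hU' hUU'
    simpa only [union_sdiff_cancel_left (hdisj hU), union_sdiff_cancel_left (hdisj hU')]
      using congrArg (· \ S) hUU'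
  have hpairwise : (𝒞 : Set (Finset V)).PairwiseDisjoint extensions := by
    intro S hS S' hS' hne
    refine Finset.disjoint_left.mpr fun T hT hT' => hne ?_
    obtain ⟨U, hU, rfl⟩ := mem_image.mp hT
    obtain ⟨U', hU', hSU⟩ := mem_image.mp hT'
    have hS'S : S' ⊆ S := G.subset_of_subset_union_of_disjoint_closedNbhd (h𝒞 S' hS').2
      (h𝒞 S' hS').1 (h𝒞 S hS).1 (hdisjN hU) (hSU ▸ subset_union_left)
    have hSS' : S ⊆ S' := G.subset_of_subset_union_of_disjoint_closedNbhd (h𝒞 S hS).2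
      (h𝒞 S hS).1 (h𝒞 S' hS').1 (hdisjN hU') (hSU.symm ▸ subset_union_left)
    exact subset_antisymm hSS' hS'S
  calc ∑ S ∈ 𝒞, 2 ^ #(G.closedNbhd S)ᶜ = #(𝒞.biUnion extensions) := by
        rw [card_biUnion hpairwise]; exact sum_congr rfl fun S _ => (hcard S).symm
    _ ≤ 2 ^ Fintype.card V := by
        simpa using card_le_univ (𝒞.biUnion extensions)

theorem card_le_two_pow_of_card_closedNbhd_le (v : V) (𝒞 : Finset (Finset V))
    (h𝒞 : ∀ S ∈ 𝒞, v ∈ S ∧ (G.induce (S : Set V)).Connected) {m : ℕ}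
    (hm : ∀ S ∈ 𝒞, #(G.closedNbhd S) ≤ m) : #𝒞 ≤ 2 ^ m := by
  have hterm (S : Finset V) (hS : S ∈ 𝒞) :
      2 ^ Fintype.card V ≤ 2 ^ m * 2 ^ #(G.closedNbhd S)ᶜ := by
    rw [← pow_add, card_compl]
    have := card_le_univ (G.closedNbhd S)
    exact Nat.pow_le_pow_right two_pos (by have := hm S hS; omega)
  have key : #𝒞 * 2 ^ Fintype.card V ≤ 2 ^ m * 2 ^ Fintype.card V := calc
    #𝒞 * 2 ^ Fintype.card V = ∑ S ∈ 𝒞, 2 ^ Fintype.card V := by rw [sum_const, smul_eq_mul]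
    _ ≤ ∑ S ∈ 𝒞, 2 ^ m * 2 ^ #(G.closedNbhd S)ᶜ := sum_le_sum hterm
    _ = 2 ^ m * ∑ S ∈ 𝒞, 2 ^ #(G.closedNbhd S)ᶜ := (mul_sum ..).symm
    _ ≤ 2 ^ m * 2 ^ Fintype.card V :=
        Nat.mul_le_mul_left _ (G.sum_two_pow_card_compl_closedNbhd_le v 𝒞 h𝒞)
  exact Nat.le_of_mul_le_mul_right key (by positivity)

end SimpleGraph

theorem stmt_0_general {V : Type*} [Fintype V] (G : SimpleGraph V) [DecidableRel G.Adj]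
    (dmax : ℕ) (hdeg : ∀ u : V, G.degree u ≤ dmax) (v : V) (r : ℕ) :
    Nat.card {S : Finset V //
        v ∈ S ∧ S.card = r ∧ (G.induce (S : Set V)).Connected}
      ≤ 2 ^ ((dmax - 1) * r + 2) := by
  classical
  rw [Nat.card_eq_fintype_card, Fintype.card_subtype]
  refine G.card_le_two_pow_of_card_closedNbhd_le v _ (fun S hS => ?_) fun S hS => ?_ <;>
    obtain ⟨hv, rfl, hconn⟩ := (Finset.mem_filter.mp hS).2
  · exact ⟨hv, hconn⟩
  · exact G.card_closedNbhd_le hconn fun u _ => hdeg u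

/-- The number of connected induced subgraphs with `r` vertices containing a fixed
vertex `v` of a finite graph with maximum degree `dmax` is at most
`2 ^ ((dmax - 1) * r + 2)`. -/
theorem stmt_0 {V : Type*} [Fintype V] (G : SimpleGraph V) [DecidableRel G.Adj]
    (dmax : ℕ) (hdeg : ∀ u : V, G.degree u ≤ dmax) (v : V) (r : ℕ) (hr : 1 ≤ r) :
    Nat.card {S : Finset V //
        v ∈ S ∧ S.card = r ∧ (G.induce (S : Set V)).Connected}
      ≤ 2 ^ ((dmax - 1) * r + 2) :=
  stmt_0_general G dmax hdeg v r
end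

section
/- Let (ρ_k) be a sequence of real numbers in [0,1] satisfying ρ_{k+1} ≤ 3^{2d+2} (m k²)^{2d+2} ρ_k² for all k ≥ 1. Suppose that ρ_1 is small enough so that 3^{2d+2}(m k²)^{2d+2} ρ_1^{2^k/(10 k²)} ≤ 1 for all k ≥ 1. Then ρ_k ≤ ρ_1^{2^{k−2}} for all k ≥ 1. -/
/-!
Squaring doubles the exponent of `ρ 1`, and the factor `C k` of the recursion is absorbed by
spending `ρ 1 ^ (2 ^ k / (10 k²))`. Inductively `ρ k ≤ ρ 1 ^ (c k * 2 ^ (k - 1))` with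
`c 1 = 1` and `c (k + 1) = c k - 1 / (10 k²)` (`c = exponentFactor`); since
`∑ 1 / i² ≤ 2`, `c k ≥ 1 / 2`.
-/

open Finset

noncomputable def exponentFactor (k : ℕ) : ℝ :=
  1 - ∑ i ∈ Ico 1 k, 1 / (10 * (i : ℝ) ^ 2)

lemma exponentFactor_one : exponentFactor 1 = 1 := by
  simp [exponentFactor]

lemma exponentFactor_succ {k : ℕ} (hk : 1 ≤ k) :
    exponentFactor (k + 1) = exponentFactor k - 1 / (10 * (k : ℝ) ^ 2) := by
  rw [exponentFactor, exponentFactor, sum_Ico_succ_top hk]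
  ring

lemma half_le_exponentFactor (k : ℕ) : 1 / 2 ≤ exponentFactor k := by
  have hsum : ∑ i ∈ Ico 1 k, ((i : ℝ) ^ 2)⁻¹ ≤ 2 := by
    have h := sum_Ioo_inv_sq_le (α := ℝ) 0 k
    rw [← Ico_add_one_left_eq_Ioo, zero_add, Nat.cast_zero, zero_add, div_one] at h
    exact h
  have hrw : ∑ i ∈ Ico 1 k, 1 / (10 * (i : ℝ) ^ 2) = (∑ i ∈ Ico 1 k, ((i : ℝ) ^ 2)⁻¹) / 10 := by
    rw [sum_div]
    exact sum_congr rfl fun i _ ↦ by field_simp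
  rw [exponentFactor, hrw]
  linarith

theorem le_rpow_exponentFactor_of_le_mul_sq {ρ C : ℕ → ℝ} (hρ : ∀ k, 0 ≤ ρ k)
    (hC : ∀ k, 0 ≤ C k) (hrec : ∀ k, 1 ≤ k → ρ (k + 1) ≤ C k * ρ k ^ 2)
    (hsmall : ∀ k, 1 ≤ k → C k * ρ 1 ^ ((2 : ℝ) ^ k / (10 * (k : ℝ) ^ 2)) ≤ 1) :
    ∀ k, 1 ≤ k → ρ k ≤ ρ 1 ^ (exponentFactor k * 2 ^ (k - 1)) := by
  intro k hk
  induction k, hk using Nat.le_induction with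
  | base => simp [exponentFactor_one]
  | succ k hk ih =>
    have hsq : ρ k ^ 2 ≤ ρ 1 ^ (exponentFactor k * 2 ^ k) := by
      calc ρ k ^ 2 ≤ (ρ 1 ^ (exponentFactor k * 2 ^ (k - 1))) ^ 2 := by gcongr; exact hρ k
        _ = ρ 1 ^ (exponentFactor k * 2 ^ k) := by
          rw [← Real.rpow_mul_natCast (hρ 1), mul_assoc, Nat.cast_ofNat,
            pow_sub_one_mul (by omega)]
    have hsplit : exponentFactor k * 2 ^ k
        = 2 ^ k / (10 * (k : ℝ) ^ 2) + exponentFactor (k + 1) * 2 ^ k := by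
      rw [exponentFactor_succ hk]
      field_simp
      ring
    have hsplit_nonneg : 0 ≤ exponentFactor (k + 1) * 2 ^ k := by
      have hc := half_le_exponentFactor (k + 1)
      positivity
    calc ρ (k + 1) ≤ C k * ρ k ^ 2 := hrec k hk
      _ ≤ C k * ρ 1 ^ (exponentFactor k * 2 ^ k) := by gcongr; exact hC k
      _ = C k * ρ 1 ^ ((2 : ℝ) ^ k / (10 * (k : ℝ) ^ 2)) *
            ρ 1 ^ (exponentFactor (k + 1) * 2 ^ k) := by
          rw [hsplit, Real.rpow_add_of_nonneg (hρ 1) (by positivity) hsplit_nonneg, mul_assoc]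
      _ ≤ ρ 1 ^ (exponentFactor (k + 1) * 2 ^ (k + 1 - 1)) := by
          rw [Nat.add_sub_cancel]
          exact mul_le_of_le_one_left (Real.rpow_nonneg (hρ 1) _) (hsmall k hk)

theorem stmt_2_general (d m : ℕ) (ρ : ℕ → ℝ)
    (hρ : ∀ k, ρ k ∈ Set.Icc (0 : ℝ) 1)
    (hrec : ∀ k : ℕ, 1 ≤ k →
      ρ (k + 1) ≤ 3 ^ (2 * d + 2) * ((m : ℝ) * (k : ℝ) ^ 2) ^ (2 * d + 2) * ρ k ^ 2)
    (hsmall : ∀ k : ℕ, 1 ≤ k →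
      3 ^ (2 * d + 2) * ((m : ℝ) * (k : ℝ) ^ 2) ^ (2 * d + 2) *
          ρ 1 ^ ((2 : ℝ) ^ (k : ℕ) / (10 * (k : ℝ) ^ 2)) ≤ 1) :
    ∀ k : ℕ, 1 ≤ k → ρ k ≤ ρ 1 ^ ((2 : ℝ) ^ ((k : ℝ) - 2)) := by
  intro k hk
  have hρ₀ : ∀ k, 0 ≤ ρ k := fun k ↦ (hρ k).1
  refine (le_rpow_exponentFactor_of_le_mul_sq hρ₀ (fun _ ↦ by positivity) hrec hsmall k hk).trans
    (Real.rpow_le_rpow_of_exponent_ge' (hρ₀ 1) (hρ 1).2 (by positivity) ?_)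
  have hexp : (2 : ℝ) ^ ((k : ℝ) - 2) = 2 ^ (k - 1) / 2 := by
    rw [show (k : ℝ) - 2 = ((k - 1 : ℕ) : ℝ) - 1 by push_cast [hk]; ring,
      Real.rpow_sub_one two_ne_zero, Real.rpow_natCast]
  rw [hexp]
  have hc := half_le_exponentFactor k
  have hpow : (0 : ℝ) < 2 ^ (k - 1) := by positivity
  nlinarith

/-- If `ρ_{k+1} ≤ 3^{2d+2} (m k²)^{2d+2} ρ_k²` and `ρ_1` is small enough so that
`3^{2d+2} (m k²)^{2d+2} ρ_1^{2^k/(10k²)} ≤ 1` for all `k ≥ 1`, then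
`ρ_k ≤ ρ_1^{2^{k-2}}` for all `k ≥ 1`. -/
theorem stmt_2 (d m : ℕ) (hd : 1 ≤ d) (hm : 1 ≤ m) (ρ : ℕ → ℝ)
    (hρ : ∀ k, ρ k ∈ Set.Icc (0 : ℝ) 1)
    (hrec : ∀ k : ℕ, 1 ≤ k →
      ρ (k + 1) ≤ 3 ^ (2 * d + 2) * ((m : ℝ) * (k : ℝ) ^ 2) ^ (2 * d + 2) * ρ k ^ 2)
    (hsmall : ∀ k : ℕ, 1 ≤ k →
      3 ^ (2 * d + 2) * ((m : ℝ) * (k : ℝ) ^ 2) ^ (2 * d + 2) *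
          ρ 1 ^ ((2 : ℝ) ^ (k : ℕ) / (10 * (k : ℝ) ^ 2)) ≤ 1) :
    ∀ k : ℕ, 1 ≤ k → ρ k ≤ ρ 1 ^ ((2 : ℝ) ^ ((k : ℝ) - 2)) :=
  stmt_2_general d m ρ hρ hrec hsmall
end

section
/- Let (Y_k)_{k∈Z} be a stationary reversible Markov chain on a finite state space S, and h: S → R^m. Then for every k ≥ 0, E[‖h(Y_k) − h(Y_0)‖² ] ≤ k · E[‖h(Y_1) − h(Y_0)‖²], where ‖·‖ is the Euclidean norm on R^m. -/
/-!
Write `⟨f, g⟩_π = ∑ₓ π x ⟪f x, g x⟫` and `T` for the transition operator `(T f) x = ∑ᵧ P x y • f y`.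
Reversibility makes `T` self-adjoint for `⟨·,·⟩_π`, and stationarity gives
`E‖h(Y_k) - h(Y_0)‖² = 2 D(P^k) h` with the Dirichlet form `D(T) g = ⟨g, g⟩_π - ⟨g, T g⟩_π`.
Telescoping, it suffices that each increment `d_j = ⟨h, T^j h⟩_π - ⟨h, T^(j+1) h⟩_π` is at most
`d_0 = D(T) h`. Since `⟨u, u⟩_π + ⟨u, T u⟩_π = ½ ∑ π x P x y ‖u x + u y‖² ≥ 0`, applying this to
`u = g - T g` shows `D(T) (T g) ≤ D(T) g`; then `d_{2i} = D(T) (T^i h) ≤ d_0`, and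
`d_{2i+1} = d_{2i} - ‖T^i (h - T h)‖²_π ≤ d_{2i}`.
-/

open Finset

open scoped RealInnerProductSpace

open Matrix in
theorem Matrix.vecMul_pow_eq_self {n R : Type*} [Fintype n] [DecidableEq n] [Semiring R]
    {M : Matrix n n R} {v : n → R} (hv : v ᵥ* M = v) (k : ℕ) : v ᵥ* M ^ k = v := by
  induction k with
  | zero => exact vecMul_one v
  | succ k ih => rw [pow_succ, ← vecMul_vecMul, ih, hv]

section Dirichlet

variable {V : Type*} [AddCommGroup V] [Module ℝ V]

def dirichletForm (B : LinearMap.BilinForm ℝ V) (T : Module.End ℝ V) (g : V) : ℝ :=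
  B g g - B g (T g)

variable {B : LinearMap.BilinForm ℝ V} {T : Module.End ℝ V}

theorem LinearMap.IsAdjointPair.pow (hadj : IsAdjointPair B B T T) (n : ℕ) :
    IsAdjointPair B B ⇑(T ^ n) ⇑(T ^ n) := by
  induction n with
  | zero => exact isAdjointPair_one
  | succ n ih =>
    have := ih.mul hadj
    rwa [← pow_succ, ← pow_succ'] at this

theorem LinearMap.IsAdjointPair.apply_pow_add (hadj : IsAdjointPair B B T T) (h : V)
    (i j : ℕ) : B h ((T ^ (i + j)) h) = B ((T ^ i) h) ((T ^ j) h) := by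
  rw [hadj.pow i, pow_add, Module.End.mul_apply]

theorem dirichletForm_apply_le (hadj : LinearMap.IsAdjointPair B B T T)
    (hT : ∀ u, 0 ≤ B u u + B u (T u)) (g : V) :
    dirichletForm B T (T g) ≤ dirichletForm B T g := by
  have key := hT (g - T g)
  have adj_g := hadj g g
  have adj_Tg := hadj g (T g)
  simp only [map_sub, LinearMap.sub_apply] at key
  unfold dirichletForm
  linarith

theorem dirichletForm_pow_apply_le (hadj : LinearMap.IsAdjointPair B B T T)
    (hT : ∀ u, 0 ≤ B u u + B u (T u)) (g : V) (i : ℕ) :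
    dirichletForm B T ((T ^ i) g) ≤ dirichletForm B T g := by
  induction i with
  | zero => simp
  | succ i ih =>
    rw [pow_succ', Module.End.mul_apply]
    exact (dirichletForm_apply_le hadj hT _).trans ih

theorem sub_apply_apply_le_dirichletForm (hadj : LinearMap.IsAdjointPair B B T T)
    (hpos : ∀ u, 0 ≤ B u u) (g : V) :
    B g (T g) - B g (T (T g)) ≤ dirichletForm B T g := by
  have key := hpos (g - T g)
  have adj_g := hadj g g
  have adj_Tg := hadj g (T g)
  simp only [map_sub, LinearMap.sub_apply] at key
  unfold dirichletForm
  linarith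

theorem sub_apply_pow_succ_le_dirichletForm (hadj : LinearMap.IsAdjointPair B B T T)
    (hpos : ∀ u, 0 ≤ B u u) (hT : ∀ u, 0 ≤ B u u + B u (T u)) (h : V) (j : ℕ) :
    B h ((T ^ j) h) - B h ((T ^ (j + 1)) h) ≤ dirichletForm B T h := by
  obtain ⟨i, rfl | rfl⟩ := j.even_or_odd'
  · rw [two_mul, add_assoc, hadj.apply_pow_add, hadj.apply_pow_add]
    simp only [pow_succ', Module.End.mul_apply]
    exact dirichletForm_pow_apply_le hadj hT h i
  · rw [two_mul, add_assoc, add_assoc, hadj.apply_pow_add, hadj.apply_pow_add]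
    simp only [pow_succ', Module.End.mul_apply]
    exact (sub_apply_apply_le_dirichletForm hadj hpos _).trans
      (dirichletForm_pow_apply_le hadj hT h i)

theorem dirichletForm_pow_le (hadj : LinearMap.IsAdjointPair B B T T)
    (hpos : ∀ u, 0 ≤ B u u) (hT : ∀ u, 0 ≤ B u u + B u (T u)) (h : V) (k : ℕ) :
    dirichletForm B (T ^ k) h ≤ k * dirichletForm B T h := by
  calc dirichletForm B (T ^ k) h
      = ∑ j ∈ range k, (B h ((T ^ j) h) - B h ((T ^ (j + 1)) h)) := by
        rw [sum_range_sub' (fun j => B h ((T ^ j) h)), dirichletForm, pow_zero,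
          Module.End.one_apply]
    _ ≤ ∑ _j ∈ range k, dirichletForm B T h :=
        sum_le_sum fun j _ => sub_apply_pow_succ_le_dirichletForm hadj hpos hT h j
    _ = k * dirichletForm B T h := by rw [sum_const, card_range, nsmul_eq_mul]

end Dirichlet

section Markov

variable {S : Type*} [Fintype S] {E : Type*} [NormedAddCommGroup E] [InnerProductSpace ℝ E]

def transitionOp [DecidableEq S] : Matrix S S ℝ →* Module.End ℝ (S → E) where
  toFun P := LinearMap.pi fun x => ∑ y, P x y • LinearMap.proj y
  map_one' := LinearMap.ext fun f => funext fun x => by simp [Matrix.one_apply]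
  map_mul' P Q := LinearMap.ext fun f => funext fun x => by
    simpa [Matrix.mul_apply, sum_smul, smul_sum, smul_smul] using sum_comm

@[simp]
theorem transitionOp_apply [DecidableEq S] (P : Matrix S S ℝ) (f : S → E) (x : S) :
    transitionOp P f x = ∑ y, P x y • f y := by
  simp [transitionOp]

noncomputable def weightedInner (π : S → ℝ) : LinearMap.BilinForm ℝ (S → E) :=
  ∑ x, π x • (innerₗ E).compl₁₂ (LinearMap.proj x) (LinearMap.proj x)

@[simp]
theorem weightedInner_apply (π : S → ℝ) (f g : S → E) :
    weightedInner π f g = ∑ x, π x * ⟪f x, g x⟫ := by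
  simp [weightedInner]

theorem weightedInner_self_nonneg {π : S → ℝ} (hπ : ∀ x, 0 ≤ π x) (f : S → E) :
    0 ≤ weightedInner π f f := by
  simp only [weightedInner_apply]
  exact sum_nonneg fun x _ => mul_nonneg (hπ x) real_inner_self_nonneg

theorem isAdjointPair_transitionOp [DecidableEq S] {P : Matrix S S ℝ} {π : S → ℝ}
    (hrev : ∀ x y, π x * P x y = π y * P y x) :
    LinearMap.IsAdjointPair (weightedInner π) (weightedInner π)
      (transitionOp (E := E) P) (transitionOp P) := by
  intro f g
  simp only [weightedInner_apply, transitionOp_apply, sum_inner, inner_sum, real_inner_smul_left,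
    real_inner_smul_right, mul_sum]
  rw [sum_comm]
  refine sum_congr rfl fun x _ => sum_congr rfl fun y _ => ?_
  rw [← mul_assoc, hrev, mul_assoc]

theorem sum_mul_norm_add_sq [DecidableEq S] {Q : Matrix S S ℝ} {π : S → ℝ}
    (hrow : ∀ x, ∑ y, Q x y = 1) (hstat : ∀ y, ∑ x, π x * Q x y = π y) (u v : S → E) :
    ∑ x, ∑ y, π x * Q x y * ‖u x + v y‖ ^ 2 =
      weightedInner π u u + weightedInner π v v + 2 * weightedInner π u (transitionOp Q v) := by
  have hu : ∑ x, ∑ y, π x * Q x y * ‖u x‖ ^ 2 = weightedInner π u u := by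
    simp only [weightedInner_apply, real_inner_self_eq_norm_sq, ← sum_mul, ← mul_sum, hrow, mul_one]
  have hv : ∑ x, ∑ y, π x * Q x y * ‖v y‖ ^ 2 = weightedInner π v v := by
    simp only [weightedInner_apply, real_inner_self_eq_norm_sq]
    rw [sum_comm]
    simp only [← sum_mul, hstat]
  have huv : ∑ x, ∑ y, π x * Q x y * ⟪u x, v y⟫ = weightedInner π u (transitionOp Q v) := by
    simp only [weightedInner_apply, transitionOp_apply, inner_sum, real_inner_smul_right, mul_sum,
      mul_assoc]
  simp only [norm_add_sq_real, mul_add, sum_add_distrib, ← hu, ← hv, ← huv, mul_sum]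
  ring_nf

theorem sum_mul_norm_sub_sq [DecidableEq S] {Q : Matrix S S ℝ} {π : S → ℝ}
    (hrow : ∀ x, ∑ y, Q x y = 1) (hstat : ∀ y, ∑ x, π x * Q x y = π y) (h : S → E) :
    ∑ x, ∑ y, π x * Q x y * ‖h y - h x‖ ^ 2 =
      2 * dirichletForm (weightedInner π) (transitionOp Q) h := by
  have := sum_mul_norm_add_sq hrow hstat (-h) h
  simp only [Pi.neg_apply, neg_add_eq_sub, map_neg, LinearMap.neg_apply, neg_neg] at this
  rw [this, dirichletForm]
  ring

theorem weightedInner_add_transitionOp_nonneg [DecidableEq S] {P : Matrix S S ℝ} {π : S → ℝ}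
    (hπ : ∀ x, 0 ≤ π x) (hP : ∀ x y, 0 ≤ P x y) (hrow : ∀ x, ∑ y, P x y = 1)
    (hstat : ∀ y, ∑ x, π x * P x y = π y) (u : S → E) :
    0 ≤ weightedInner π u u + weightedInner π u (transitionOp P u) := by
  have hsum := sum_mul_norm_add_sq hrow hstat u u
  have hnonneg : 0 ≤ ∑ x, ∑ y, π x * P x y * ‖u x + u y‖ ^ 2 :=
    sum_nonneg fun x _ => sum_nonneg fun y _ =>
      mul_nonneg (mul_nonneg (hπ x) (hP x y)) (sq_nonneg _)
  linarith

end Markov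

theorem stmt_14_general {S : Type*} [Fintype S] [DecidableEq S] (m : ℕ)
    (P : Matrix S S ℝ) (π : S → ℝ)
    (hπ0 : ∀ x, 0 ≤ π x)
    (hP0 : ∀ x y, 0 ≤ P x y) (hProw : ∀ x, ∑ y, P x y = 1)
    (hstat : ∀ y, ∑ x, π x * P x y = π y)
    (hrev : ∀ x y, π x * P x y = π y * P y x)
    (h : S → EuclideanSpace ℝ (Fin m)) (k : ℕ) :
    ∑ x, ∑ y, π x * (P ^ k) x y * ‖h y - h x‖ ^ 2
      ≤ (k : ℝ) * ∑ x, ∑ y, π x * P x y * ‖h y - h x‖ ^ 2 := by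
  have hP : P ∈ Matrix.rowStochastic ℝ S := Matrix.mem_rowStochastic_iff_sum.2 ⟨hP0, hProw⟩
  have hrow_pow : ∀ x, ∑ y, (P ^ k) x y = 1 :=
    Matrix.sum_row_of_mem_rowStochastic (pow_mem hP k)
  have hstat_pow : ∀ y, ∑ x, π x * (P ^ k) x y = π y :=
    congrFun (Matrix.vecMul_pow_eq_self (funext hstat) k)
  rw [sum_mul_norm_sub_sq hrow_pow hstat_pow, sum_mul_norm_sub_sq hProw hstat, map_pow]
  have := dirichletForm_pow_le (isAdjointPair_transitionOp (E := EuclideanSpace ℝ (Fin m)) hrev)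
    (weightedInner_self_nonneg hπ0) (weightedInner_add_transitionOp_nonneg hπ0 hP0 hProw hstat) h k
  linarith

/-- Naor–Peres/Ball: for a stationary reversible Markov chain with transition
matrix `P` and stationary distribution `π` on a finite state space, and any
`h : S → ℝ^m`, `E[‖h(Y_k) - h(Y_0)‖²] ≤ k E[‖h(Y_1) - h(Y_0)‖²]`, where the
joint law of `(Y_0, Y_k)` is `π(x) P^k(x,y)`. -/
theorem stmt_14 {S : Type*} [Fintype S] [DecidableEq S] (m : ℕ)
    (P : Matrix S S ℝ) (π : S → ℝ)
    (hπ0 : ∀ x, 0 ≤ π x) (hπ1 : ∑ x, π x = 1)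
    (hP0 : ∀ x y, 0 ≤ P x y) (hProw : ∀ x, ∑ y, P x y = 1)
    (hstat : ∀ y, ∑ x, π x * P x y = π y)
    (hrev : ∀ x y, π x * P x y = π y * P y x)
    (h : S → EuclideanSpace ℝ (Fin m)) (k : ℕ) :
    ∑ x, ∑ y, π x * (P ^ k) x y * ‖h y - h x‖ ^ 2
      ≤ (k : ℝ) * ∑ x, ∑ y, π x * P x y * ‖h y - h x‖ ^ 2 :=
  stmt_14_general m P π hπ0 hP0 hProw hstat hrev h k
end
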